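/- (Lemma 4.2, third bullet.) Let P > 2 and define g₂ : ℝ → ℝ by g₂(B) = 1 − (1/2 + (1/2)·erf(√(B/2) − √(P/2)))². Set ζ₁ = ((√P − √(P−2))/2)² and ζ₂ = ((√P + √(P−2))/2)². Then g₂ is concave on [ζ₁, ζ₂] (ConcaveOn ℝ (Set.Icc ζ₁ ζ₂) g₂). -/

import Mathlib

/-!
Write `u = √(B/2) - √(P/2)` and `r = √(B/2)`. The second derivative of `g₂` in `B` is a positive
multiple of `(1 + erf u) (u + 1/(2r)) - exp (-u²)/√π`. The endpoints `ζ₁, ζ₂` are the roots of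
`(2B + 1)² = 4PB`, and between them `u + 1/(2r) ≤ -u`. The bracket is then nonpositive by the
Gaussian tail bound `(1 + erf u) (-u) ≤ exp (-u²)/√π`, which comes from comparing
`∫_{-∞}^u (-u) e^{-t²} dt` with `∫_{-∞}^u (-t) e^{-t²} dt = e^{-u²}/2`.
-/

open MeasureTheory ProbabilityTheory Real Set

noncomputable def erf (x : ℝ) : ℝ :=
  (2 / Real.sqrt Real.pi) * ∫ t in (0:ℝ)..x, Real.exp (-t^2)

lemma integrable_exp_neg_sq : Integrable fun t : ℝ => exp (-t ^ 2) := by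
  simpa using integrable_exp_neg_mul_sq one_pos

lemma integral_Iic_zero_exp_neg_sq : ∫ t in Iic (0 : ℝ), exp (-t ^ 2) = √π / 2 := by
  have hneg := integral_comp_neg_Iic 0 fun t => exp (-t ^ 2)
  have hIoi := integral_gaussian_Ioi 1
  simp only [neg_sq, neg_zero, neg_mul, one_mul, div_one] at hneg hIoi
  rw [hneg, hIoi]

lemma one_add_erf_eq_integral_Iic (u : ℝ) :
    1 + erf u = 2 / √π * ∫ t in Iic u, exp (-t ^ 2) := by
  rw [erf, ← intervalIntegral.integral_Iic_sub_Iic integrable_exp_neg_sq.integrableOn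
    integrable_exp_neg_sq.integrableOn, integral_Iic_zero_exp_neg_sq]
  field_simp
  ring

lemma one_add_erf_nonneg (u : ℝ) : 0 ≤ 1 + erf u := by
  rw [one_add_erf_eq_integral_Iic]
  have : 0 ≤ ∫ t in Iic u, exp (-t ^ 2) :=
    setIntegral_nonneg measurableSet_Iic fun t _ => (exp_pos (-t ^ 2)).le
  positivity

lemma integral_Iic_neg_mul_exp_neg_sq (u : ℝ) :
    ∫ t in Iic u, -t * exp (-t ^ 2) = exp (-u ^ 2) / 2 := by
  have hlim : Filter.Tendsto (fun t : ℝ => exp (-t ^ 2) / 2) Filter.atBot (nhds 0) := by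
    have := tendsto_exp_atBot.comp <| Filter.tendsto_neg_atTop_atBot.comp <|
      (Filter.tendsto_pow_atTop two_ne_zero).comp Filter.tendsto_abs_atBot_atTop
    simpa [Function.comp_def] using this.div_const 2
  rw [integral_Iic_of_hasDerivAt_of_tendsto' (fun t _ => ?_)
    (by simpa using (integrable_mul_exp_neg_mul_sq one_pos).neg.integrableOn) hlim, sub_zero]
  have hsq : HasDerivAt (fun t : ℝ => -t ^ 2) (-(2 * t)) t :=
    (((hasDerivAt_id' t).pow 2).neg).congr_deriv (by ring)
  exact (hsq.exp.div_const 2).congr_deriv (by ring)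

lemma one_add_erf_mul_neg_le (u : ℝ) : (1 + erf u) * -u ≤ exp (-u ^ 2) / √π := by
  have hmono : ∫ t in Iic u, -u * exp (-t ^ 2) ≤ ∫ t in Iic u, -t * exp (-t ^ 2) :=
    setIntegral_mono_on (integrable_exp_neg_sq.integrableOn.const_mul _)
      (by simpa using (integrable_mul_exp_neg_mul_sq one_pos).neg.integrableOn) measurableSet_Iic
      fun t ht => mul_le_mul_of_nonneg_right (neg_le_neg ht) (exp_pos _).le
  rw [integral_const_mul, integral_Iic_neg_mul_exp_neg_sq] at hmono
  rw [one_add_erf_eq_integral_Iic]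
  calc 2 / √π * (∫ t in Iic u, exp (-t ^ 2)) * -u
      = 2 / √π * (-u * ∫ t in Iic u, exp (-t ^ 2)) := by ring
    _ ≤ 2 / √π * (exp (-u ^ 2) / 2) := by gcongr
    _ = exp (-u ^ 2) / √π := by ring

lemma hasDerivAt_erf (x : ℝ) : HasDerivAt erf (2 / √π * exp (-x ^ 2)) x := by
  have hc : Continuous fun t : ℝ => exp (-t ^ 2) := by fun_prop
  exact (intervalIntegral.integral_hasDerivAt_right (hc.intervalIntegrable 0 x)
    hc.stronglyMeasurable.stronglyMeasurableAtFilter hc.continuousAt).const_mul _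

section
variable (c : ℝ) {B : ℝ}

lemma hasDerivAt_sqrt_half_sub (hB : 0 < B) :
    HasDerivAt (fun B => √(B / 2) - c) (1 / (4 * √(B / 2))) B :=
  ((((hasDerivAt_id' B).div_const 2).sqrt (by positivity)).sub_const c).congr_deriv (by ring)

lemma hasDerivAt_one_sub_sq_erf (hB : 0 < B) :
    HasDerivAt (fun B => 1 - (1 / 2 + 1 / 2 * erf (√(B / 2) - c)) ^ 2)
      (-(1 + erf (√(B / 2) - c)) * exp (-(√(B / 2) - c) ^ 2) / (4 * √π * √(B / 2))) B := by
  have hu := hasDerivAt_sqrt_half_sub c hB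
  have := ((((hasDerivAt_erf _).comp B hu).const_mul (1 / 2)).const_add (1 / 2)).pow 2
  refine (this.const_sub 1).congr_deriv ?_
  simp only [Function.comp_apply]
  have hr : 0 < √(B / 2) := sqrt_pos.2 (by positivity)
  have hπ : 0 < √π := sqrt_pos.2 pi_pos
  field_simp
  ring

lemma hasDerivAt_deriv_one_sub_sq_erf (hB : 0 < B) :
    HasDerivAt (fun B => -(1 + erf (√(B / 2) - c)) * exp (-(√(B / 2) - c) ^ 2) / (4 * √π * √(B / 2)))
      (exp (-(√(B / 2) - c) ^ 2) / (4 * √π * B) *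
        ((1 + erf (√(B / 2) - c)) * (√(B / 2) - c + 1 / (2 * √(B / 2))) -
          exp (-(√(B / 2) - c) ^ 2) / √π)) B := by
  have hu := hasDerivAt_sqrt_half_sub c hB
  have herf := ((hasDerivAt_erf _).comp B hu).const_add 1
  have hexp := ((hu.pow 2).neg).exp
  have hden := (((hasDerivAt_id' B).div_const 2).sqrt (by positivity)).const_mul (4 * √π)
  have hr : 0 < √(B / 2) := sqrt_pos.2 (by positivity)
  have hπ : 0 < √π := sqrt_pos.2 pi_pos
  refine ((herf.neg.mul hexp).div hden (by positivity)).congr_deriv ?_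
  simp only [Function.comp_apply, Pi.mul_apply, Pi.neg_apply, Pi.pow_apply]
  have hB : B = 2 * √(B / 2) ^ 2 := by rw [sq_sqrt (by positivity)]; ring
  generalize erf (√(B / 2) - c) = w
  generalize exp (-(√(B / 2) - c) ^ 2) = E
  generalize √(B / 2) = r at hB hr
  subst hB
  field_simp
  ring
end

lemma concaveOn_one_sub_sq_erf (c : ℝ) (hc : 0 ≤ c) {S : Set ℝ} (hS : Convex ℝ S)
    (hS₀ : S ⊆ Ioi 0) (hSc : ∀ B ∈ S, (2 * B + 1) ^ 2 ≤ 8 * c ^ 2 * B) :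
    ConcaveOn ℝ S (fun B => 1 - (1 / 2 + 1 / 2 * erf (√(B / 2) - c)) ^ 2) := by
  have hint : interior S ⊆ Ioi 0 := interior_subset.trans hS₀
  refine concaveOn_of_hasDerivWithinAt2_nonpos hS
    (fun B hB => (hasDerivAt_one_sub_sq_erf c (hS₀ hB)).continuousAt.continuousWithinAt)
    (fun B hB => (hasDerivAt_one_sub_sq_erf c (hint hB)).hasDerivWithinAt)
    (fun B hB => (hasDerivAt_deriv_one_sub_sq_erf c (hint hB)).hasDerivWithinAt)
    fun B hBS => ?_
  have hB : 0 < B := hint hBS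
  set r := √(B / 2) with hr_def
  set u := r - c with hu
  have hr : 0 < r := sqrt_pos.2 (by positivity)
  have hBr : B = 2 * r ^ 2 := by rw [hr_def, sq_sqrt (by positivity)]; ring
  have hsq : (4 * r ^ 2 + 1) ^ 2 ≤ (4 * c * r) ^ 2 := by
    have := hSc B (interior_subset hBS)
    rw [hBr] at this
    linear_combination this
  have hle : 4 * r ^ 2 + 1 ≤ 4 * c * r := abs_le_of_sq_le_sq' hsq (by positivity) |>.2
  have hbound : u + 1 / (2 * r) ≤ -u := by
    have : 1 / (2 * r) ≤ 2 * c - 2 * r := by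
      rw [div_le_iff₀ (by positivity)]
      linarith
    linarith
  have hbracket : (1 + erf u) * (u + 1 / (2 * r)) - exp (-u ^ 2) / √π ≤ 0 :=
    sub_nonpos.2 <| (mul_le_mul_of_nonneg_left hbound (one_add_erf_nonneg u)).trans
      (one_add_erf_mul_neg_le u)
  exact mul_nonpos_of_nonneg_of_nonpos (by positivity) hbracket

lemma sq_two_mul_add_one_le_of_mem_Icc {P B : ℝ} (hP : 2 ≤ P)
    (hB : B ∈ Icc (((√P - √(P - 2)) / 2) ^ 2) (((√P + √(P - 2)) / 2) ^ 2)) :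
    (2 * B + 1) ^ 2 ≤ 4 * P * B := by
  have ha := sq_sqrt (by linarith : 0 ≤ P)
  have hb := sq_sqrt (by linarith : 0 ≤ P - 2)
  have hfactor : (2 * B + 1) ^ 2 - 4 * P * B =
      4 * (B - ((√P - √(P - 2)) / 2) ^ 2) * (B - ((√P + √(P - 2)) / 2) ^ 2) := by
    linear_combination (2 * B - 1 - (√P ^ 2 - √(P - 2) ^ 2 - 2) / 4) * ha
      + (2 * B + 1 + (√P ^ 2 - √(P - 2) ^ 2 - 2) / 4) * hb
  nlinarith [mul_nonneg (sub_nonneg.2 hB.1) (sub_nonneg.2 hB.2)]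

theorem stmt_17 (P : ℝ) (hP : 2 < P)
    (g₂ : ℝ → ℝ)
    (hg₂ : ∀ B, g₂ B = 1 - (1/2 + (1/2) * erf (Real.sqrt (B/2) - Real.sqrt (P/2)))^2)
    (ζ₁ ζ₂ : ℝ)
    (hζ₁ : ζ₁ = ((Real.sqrt P - Real.sqrt (P - 2)) / 2)^2)
    (hζ₂ : ζ₂ = ((Real.sqrt P + Real.sqrt (P - 2)) / 2)^2) :
    ConcaveOn ℝ (Set.Icc ζ₁ ζ₂) g₂ := by
  have hζ₁_pos : 0 < ζ₁ := by
    rw [hζ₁]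
    have : √(P - 2) < √P := sqrt_lt_sqrt (by linarith) (by linarith)
    positivity
  rw [funext hg₂]
  refine concaveOn_one_sub_sq_erf _ (sqrt_nonneg _) (convex_Icc ζ₁ ζ₂)
    (fun B hB => hζ₁_pos.trans_le hB.1) fun B hB => ?_
  rw [sq_sqrt (by linarith)]
  subst hζ₁ hζ₂
  linarith [sq_two_mul_add_one_le_of_mem_Icc hP.le hB]
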